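/- If u is a nontrivial upcycle for A^n, then for any letter ℓ ∈ A, the frame of the window of u covering the constant word ℓ^n is not curtained. -/

import Mathlib

/-- The window of length `n` of the cyclic partial word `u` starting at position `i`
covers the total word `w`. -/
def Covers (a n : ℕ) (u : ℕ → Option (Fin a)) (i : ℕ) (w : Fin n → Fin a) : Prop :=
  ∀ j : Fin n, u (i + (j : ℕ)) = none ∨ u (i + (j : ℕ)) = some (w j)

/-- `u`, viewed as a cyclic partial word of length `N`, is a universal partial cycle
for `(Fin a)^n`. -/
def IsUpcycle (a n N : ℕ) (u : ℕ → Option (Fin a)) : Prop :=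
  (∀ i, u (i + N) = u i) ∧ ∀ w : Fin n → Fin a, ∃! i : Fin N, Covers a n u (i : ℕ) w

/-- The frame of the window of `u` at position `i` is `k`-curtained (for
`1 ≤ k ≤ n`): for each `j < k`, position `j` or position `n - k + j` of the window is
a diamond.  Curtained means `k`-curtained for some `k`. -/
def Curtained (a n : ℕ) (u : ℕ → Option (Fin a)) (i : ℕ) : Prop :=
  ∃ k, 1 ≤ k ∧ k ≤ n ∧ ∀ j < k, u (i + j) = none ∨ u (i + (n - k + j)) = none

/-!
The diamonds of an upcycle are `n`-periodic: if `u p = ◊` but `u (p + n) = c`, pick `c' ≠ c`; the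
word `s c'` (with `s` read off positions `p + 1, …, p + n - 1`) is covered at some `q`, so a word
`y s` is covered both at `q - 1` and at `p`, forcing `q ≡ p + 1`, although the window at `p + 1`
ends in `c`. A nontrivial upcycle also has period `N > n`, since otherwise every window would
contain a fixed letter.

Now let the window at `i` cover `ℓⁿ` with a `k`-curtained frame. Wherever the window at `i` has a
letter (necessarily `ℓ`), the window at `i + k` has `◊` or `ℓ`: inside the window at `i` this is
clear, and past its end the curtain places a diamond exactly `n` positions earlier. So the window at
`i` covers every word covered at `i + k`, whence `N ∣ k`, which is impossible for `1 ≤ k ≤ n < N`.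
-/

section Upcycle

variable {a n N : ℕ} {u : ℕ → Option (Fin a)} {x y : ℕ}

theorem Option.eq_none_or_eq_some_getD {α : Type*} (o : Option α) (d : α) :
    o = none ∨ o = some (o.getD d) := by
  cases o <;> simp

theorem Function.Periodic.apply_eq_of_modEq {α : Type*} {f : ℕ → α}
    (hf : Function.Periodic f N) (h : x ≡ y [MOD N]) : f x = f y :=
  (hf.map_mod_nat x).symm.trans ((congrArg f h).trans (hf.map_mod_nat y))

theorem Covers.eq_of_apply_eq_some {w : Fin n → Fin a} (h : Covers a n u x w) (j : Fin n)
    {c : Fin a} (hc : u (x + j) = some c) : w j = c := by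
  rcases h j with h | h <;> rw [hc] at h
  · exact absurd h (Option.some_ne_none c)
  · exact (Option.some.inj h).symm

theorem Covers.of_modEq {w : Fin n → Fin a} (hper : Function.Periodic u N)
    (hxy : x ≡ y [MOD N]) (h : Covers a n u x w) : Covers a n u y w := fun j => by
  rw [← hper.apply_eq_of_modEq (hxy.add_right j)]
  exact h j

theorem covers_cons_iff {m : ℕ} {c : Fin a} {s : Fin m → Fin a} :
    Covers a (m + 1) u x (Fin.cons c s : Fin (m + 1) → Fin a) ↔
      (u x = none ∨ u x = some c) ∧ Covers a m u (x + 1) s := by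
  simp only [Covers, Fin.forall_fin_succ, Fin.val_zero, Fin.val_succ, Fin.cons_zero, Fin.cons_succ,
    add_zero, add_assoc, add_comm 1]

theorem covers_snoc_iff {m : ℕ} {c : Fin a} {s : Fin m → Fin a} :
    Covers a (m + 1) u x (Fin.snoc s c : Fin (m + 1) → Fin a) ↔
      Covers a m u x s ∧ (u (x + m) = none ∨ u (x + m) = some c) := by
  simp only [Covers, Fin.forall_fin_succ', Fin.val_castSucc, Fin.val_last, Fin.snoc_castSucc,
    Fin.snoc_last]

def fillWindow (u : ℕ → Option (Fin a)) (x : ℕ) (d : Fin a) : Fin n → Fin a :=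
  fun j => (u (x + j)).getD d

theorem covers_fillWindow (d : Fin a) : Covers a n u x (fillWindow u x d) :=
  fun _ => Option.eq_none_or_eq_some_getD _ d

theorem IsUpcycle.periodic (hu : IsUpcycle a n N u) : Function.Periodic u N :=
  hu.1

theorem IsUpcycle.modEq_of_covers {w : Fin n → Fin a} (hu : IsUpcycle a n N u)
    (hx : Covers a n u x w) (hy : Covers a n u y w) : x ≡ y [MOD N] := by
  obtain ⟨q, -, huniq⟩ := hu.2 w
  have hres : ∀ z, Covers a n u z w → z % N = q := fun z hz =>
    congrArg Fin.val <| huniq ⟨z % N, Nat.mod_lt z q.pos⟩ <|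
      hz.of_modEq hu.periodic (Nat.mod_modEq z N).symm
  exact (hres x hx).trans (hres y hy).symm

theorem IsUpcycle.lt_period [Nontrivial (Fin a)] (hu : IsUpcycle a n N u)
    (hletter : ∃ p, u p ≠ none) : n < N := by
  obtain ⟨p, hp⟩ := hletter
  obtain ⟨c, hc⟩ := Option.ne_none_iff_exists'.mp hp
  obtain ⟨c', hc'⟩ := exists_ne c
  obtain ⟨q, hq, -⟩ := hu.2 fun _ => c'
  by_contra! hNn
  have hj : (p + (N - q)) % N < n := (Nat.mod_lt _ q.pos).trans_le hNn
  have hqj : q + (p + (N - q)) % N ≡ p [MOD N] := by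
    refine ((Nat.mod_modEq _ N).add_left q).trans ?_
    rw [show (q : ℕ) + (p + (N - q)) = p + N by omega]
    exact Nat.add_modEq_right
  exact hc' <| hq.eq_of_apply_eq_some ⟨_, hj⟩ <| (hu.periodic.apply_eq_of_modEq hqj).trans hc

theorem IsUpcycle.apply_add_eq_none [Nontrivial (Fin a)] (hu : IsUpcycle a n N u) {p : ℕ}
    (hp : u p = none) : u (p + n) = none := by
  obtain _ | m := n
  · exact hp
  by_contra hpn
  obtain ⟨c, hc⟩ := Option.ne_none_iff_exists'.mp hpn
  obtain ⟨c', hc'⟩ := exists_ne c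
  set s : Fin m → Fin a := fillWindow u (p + 1) c
  obtain ⟨q, hq, -⟩ := hu.2 (Fin.snoc s c')
  set r := q + N - 1
  have hr : Covers a (m + 1) u (r + 1) (Fin.snoc s c') := by
    refine hq.of_modEq hu.periodic ?_
    rw [show r + 1 = q + N by have := q.pos; omega]
    exact Nat.add_modEq_right.symm
  set t : Fin (m + 1) → Fin a := Fin.cons ((u r).getD c) s
  have ht_r : Covers a (m + 1) u r t :=
    covers_cons_iff.2 ⟨Option.eq_none_or_eq_some_getD _ c, (covers_snoc_iff.1 hr).1⟩
  have ht_p : Covers a (m + 1) u p t := covers_cons_iff.2 ⟨Or.inl hp, covers_fillWindow c⟩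
  have hsucc : Covers a (m + 1) u (p + 1) (Fin.snoc s c') :=
    hr.of_modEq hu.periodic ((hu.modEq_of_covers ht_r ht_p).add_right 1)
  have hlast := hsucc.eq_of_apply_eq_some (Fin.last m)
    (by rw [Fin.val_last, add_assoc, add_comm 1 m, hc])
  rw [Fin.snoc_last] at hlast
  exact hc' hlast

theorem covers_fillWindow_add_of_curtain {ℓ : Fin a} {i k : ℕ}
    (hnone : ∀ p, u p = none → u (p + n) = none) (hi : Covers a n u i fun _ => ℓ)
    (hkn : k ≤ n) (hcur : ∀ j < k, u (i + j) = none ∨ u (i + (n - k + j)) = none) :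
    Covers a n u i (fillWindow u (i + k) ℓ) := by
  intro j
  rcases hij : u (i + j) with _ | c
  · exact Or.inl rfl
  have hcℓ : ℓ = c := hi.eq_of_apply_eq_some j hij
  have hshift : u (i + k + j) = none ∨ u (i + k + j) = some ℓ := by
    by_cases hjk : k + j < n
    · simpa only [add_assoc] using hi ⟨k + j, hjk⟩
    · have hcur_j : u (i + (k + j - n)) = none := by
        refine (hcur _ (by have := j.isLt; omega)).resolve_right ?_
        rw [show n - k + (k + j - n) = j by omega, hij]
        exact Option.some_ne_none c
      left
      simpa only [show i + (k + j - n) + n = i + k + j by omega] using hnone _ hcur_j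
  right
  rw [fillWindow, ← hcℓ]
  rcases hshift with h | h <;> rw [h] <;> rfl

end Upcycle

theorem window_covering_constant_not_curtained_general (a n N : ℕ) (ha : 2 ≤ a)
    (u : ℕ → Option (Fin a))
    (hu : IsUpcycle a n N u)
    (hletter : ∃ i, u i ≠ none)
    (ℓ : Fin a) (i : ℕ) (hi : Covers a n u i (fun _ => ℓ)) :
    ¬ Curtained a n u i := by
  rintro ⟨k, hk, hkn, hcur⟩
  have : Nontrivial (Fin a) := Fin.nontrivial_iff_two_le.mpr ha
  have hcovers : Covers a n u i (fillWindow u (i + k) ℓ) :=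
    covers_fillWindow_add_of_curtain (fun _ => hu.apply_add_eq_none) hi hkn hcur
  have hdvd : N ∣ k :=
    Nat.add_modEq_left_iff.mp (hu.modEq_of_covers (covers_fillWindow ℓ) hcovers)
  exact (Nat.le_of_dvd hk hdvd).not_gt (hkn.trans_lt (hu.lt_period hletter))

/-- If `u` is a nontrivial upcycle for `(Fin a)^n`, then for any letter `ℓ`, the frame
of the window of `u` covering the constant word `ℓ^n` is not curtained. -/
theorem window_covering_constant_not_curtained (a n N : ℕ) (ha : 2 ≤ a) (hn : 0 < n)
    (u : ℕ → Option (Fin a))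
    (hu : IsUpcycle a n N u)
    (hdiam : ∃ i, u i = none) (hletter : ∃ i, u i ≠ none)
    (ℓ : Fin a) (i : ℕ) (hi : Covers a n u i (fun _ => ℓ)) :
    ¬ Curtained a n u i :=
  window_covering_constant_not_curtained_general a n N ha u hu hletter ℓ i hi
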